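/- arXiv:1702.08142 — 3 statements merged into one kernel-verified Lean document; each statement's English description precedes it below -/
import Mathlib

section
/- (Legendre dual, Theorem 1) For any strictly positive probability vector p on S, the supremum over all strictly positive probability vectors q of the quantity Σ_{x∈S⁺} θ_q(x) η_p(x) − ψ(q) equals the negative entropy Σ_{x∈S} p(x) log p(x), and this supremum is attained at q = p. -/
/-!
Möbius inversion on the up-sets gives `Σ_x μ(s,x) η_p(x) = p(s)`, so exchanging the order of
summation turns `Σ_x θ_q(x) η_p(x)` into the cross-entropy term `Σ_s p(s) log q(s)`. The `x = ⊥`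
summand is `θ_q(⊥) η_p(⊥) = log q(⊥)`, which is exactly what `ψ(q)` removes, so the objective is
`Σ_s p(s) log q(s)`; by Gibbs' inequality it is maximised at `q = p`.
-/

local instance {S : Type*} [PartialOrder S] [DecidableEq S]
    [DecidableRel ((· ≤ ·) : S → S → Prop)] :
    DecidableRel ((· < ·) : S → S → Prop) :=
  fun a b => decidable_of_iff (a ≤ b ∧ a ≠ b) lt_iff_le_and_ne.symm

/-- `θ_p(x) = Σ_{s∈S} μ(s,x) log p(s)`. -/
noncomputable def thetaP {S : Type*} [Fintype S] (mu : S → S → ℤ) (p : S → ℝ) (x : S) : ℝ :=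
  ∑ s : S, (mu s x : ℝ) * Real.log (p s)

/-- `η_p(x) = Σ_{s ≥ x} p(s)`. -/
noncomputable def etaP {S : Type*} [Fintype S] [PartialOrder S]
    [DecidableRel ((· ≤ ·) : S → S → Prop)] (p : S → ℝ) (x : S) : ℝ :=
  ∑ s ∈ Finset.univ.filter (fun s => x ≤ s), p s

open Finset Real

theorem mul_log_sub_mul_log_le_sub {a b : ℝ} (ha : 0 ≤ a) (hb : 0 < b) :
    a * log b - a * log a ≤ b - a := by
  obtain rfl | ha := ha.eq_or_lt
  · simpa using hb.le
  calc a * log b - a * log a = a * log (b / a) := by rw [log_div hb.ne' ha.ne']; ring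
    _ ≤ a * (b / a - 1) := by gcongr; exact log_le_sub_one_of_pos (div_pos hb ha)
    _ = b - a := by field_simp

theorem sum_mul_log_le_sum_mul_log {ι : Type*} (s : Finset ι) {p q : ι → ℝ}
    (hp : ∀ i ∈ s, 0 ≤ p i) (hq : ∀ i ∈ s, 0 < q i) (hsum : ∑ i ∈ s, q i ≤ ∑ i ∈ s, p i) :
    ∑ i ∈ s, p i * log (q i) ≤ ∑ i ∈ s, p i * log (p i) := by
  have : ∑ i ∈ s, (p i * log (q i) - p i * log (p i)) ≤ ∑ i ∈ s, (q i - p i) :=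
    sum_le_sum fun i hi => mul_log_sub_mul_log_le_sub (hp i hi) (hq i hi)
  rw [sum_sub_distrib, sum_sub_distrib] at this
  linarith

structure IsMoebiusFun {S : Type*} [PartialOrder S] [Fintype S] [DecidableEq S]
    [DecidableRel ((· ≤ ·) : S → S → Prop)] (mu : S → S → ℤ) : Prop where
  apply_self : ∀ x, mu x x = 1
  apply_of_lt : ∀ x y, x < y → mu x y = -∑ s ∈ univ.filter (fun s => x ≤ s ∧ s < y), mu x s
  apply_of_not_le : ∀ x y, ¬ x ≤ y → mu x y = 0

namespace IsMoebiusFun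

variable {S : Type*} [PartialOrder S] [Fintype S] [DecidableEq S]
  [DecidableRel ((· ≤ ·) : S → S → Prop)] {mu : S → S → ℤ}

theorem sum_Icc (hmu : IsMoebiusFun mu) {s t : S} (hst : s ≤ t) :
    ∑ x ∈ univ.filter (fun x => s ≤ x ∧ x ≤ t), mu s x = if s = t then 1 else 0 := by
  obtain rfl | hlt := hst.eq_or_lt
  · have : univ.filter (fun x => s ≤ x ∧ x ≤ s) = {s} := by
      ext x; simp [le_antisymm_iff, and_comm]
    simp [this, hmu.apply_self]
  · have : univ.filter (fun x => s ≤ x ∧ x ≤ t) =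
        insert t (univ.filter (fun x => s ≤ x ∧ x < t)) := by
      ext x; simp only [mem_insert, mem_filter, mem_univ, true_and, le_iff_lt_or_eq (b := t)]
      constructor
      · rintro ⟨hsx, hxt | rfl⟩ <;> simp_all
      · rintro (rfl | ⟨hsx, hxt⟩) <;> simp_all
    rw [this, sum_insert (by simp), hmu.apply_of_lt s t hlt, if_neg hlt.ne, neg_add_cancel]

theorem sum_Iic (hmu : IsMoebiusFun mu) (s t : S) :
    ∑ x ∈ univ.filter (· ≤ t), mu s x = if s = t then 1 else 0 := by
  rw [← sum_filter_of_ne (p := (s ≤ ·))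
    fun x _ h => not_not.1 (mt (hmu.apply_of_not_le s x) h), filter_filter]
  by_cases hst : s ≤ t
  · simpa only [and_comm] using hmu.sum_Icc hst
  · rw [if_neg (by rintro rfl; exact hst le_rfl)]
    exact sum_eq_zero fun x hx => absurd ((mem_filter.1 hx).2.2.trans (mem_filter.1 hx).2.1) hst

theorem sum_mul_etaP (hmu : IsMoebiusFun mu) (p : S → ℝ) (s : S) :
    ∑ x, (mu s x : ℝ) * etaP p x = p s := by
  calc ∑ x, (mu s x : ℝ) * etaP p x
      = ∑ t, p t * ((∑ x ∈ univ.filter (· ≤ t), mu s x : ℤ) : ℝ) := by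
        simp only [etaP, mul_sum, sum_filter, Int.cast_sum]
        rw [sum_comm]
        exact sum_congr rfl fun t _ => sum_congr rfl fun x _ => by split_ifs <;> ring
    _ = p s := by simp [hmu.sum_Iic]

theorem sum_thetaP_mul_etaP (hmu : IsMoebiusFun mu) (p q : S → ℝ) :
    ∑ x, thetaP mu q x * etaP p x = ∑ s, p s * log (q s) := by
  simp only [thetaP, sum_mul]
  rw [sum_comm]
  refine sum_congr rfl fun s _ => ?_
  rw [← hmu.sum_mul_etaP p s, sum_mul]
  exact sum_congr rfl fun x _ => by ring

theorem thetaP_bot [OrderBot S] (hmu : IsMoebiusFun mu) (q : S → ℝ) :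
    thetaP mu q ⊥ = log (q ⊥) := by
  rw [thetaP, sum_eq_single ⊥ (fun s _ hs => by rw [hmu.apply_of_not_le s ⊥ (by simpa)]; simp)
    (by simp), hmu.apply_self, Int.cast_one, one_mul]

theorem sum_ne_bot_thetaP_mul_etaP_sub_neg_log [OrderBot S] (hmu : IsMoebiusFun mu)
    {p : S → ℝ} (hp : ∑ x, p x = 1) (q : S → ℝ) :
    (∑ x : {x : S // x ≠ ⊥}, thetaP mu q x * etaP p x) - (-log (q ⊥)) =
      ∑ s, p s * log (q s) := by
  have hη : etaP p ⊥ = 1 := by simpa [etaP] using hp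
  rw [← hmu.sum_thetaP_mul_etaP,
    Fintype.sum_eq_add_sum_subtype_ne (fun x => thetaP mu q x * etaP p x) ⊥, hmu.thetaP_bot, hη]
  ring

end IsMoebiusFun

/-- (Legendre dual) For any strictly positive probability vector `p` on `S`, the supremum over
all strictly positive probability vectors `q` of `Σ_{x∈S⁺} θ_q(x) η_p(x) − ψ(q)`
(where `ψ(q) = −log q(⊥)`) equals the negative entropy `Σ_{x∈S} p(x) log p(x)`,
and it is attained at `q = p`. -/
theorem legendre_dual_negentropy {S : Type*} [Fintype S] [PartialOrder S] [OrderBot S]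
    [DecidableEq S] [DecidableRel ((· ≤ ·) : S → S → Prop)]
    (mu : S → S → ℤ)
    (hmu_self : ∀ x : S, mu x x = 1)
    (hmu_lt : ∀ x y : S, x < y →
      mu x y = -∑ s ∈ Finset.univ.filter (fun s => x ≤ s ∧ s < y), mu x s)
    (hmu_nle : ∀ x y : S, ¬ x ≤ y → mu x y = 0)
    (p : S → ℝ)
    (hp : ∀ x, p x ∈ Set.Ioo (0 : ℝ) 1) (hpsum : ∑ x : S, p x = 1) :
    IsGreatest
      {v : ℝ | ∃ q : S → ℝ, (∀ x, q x ∈ Set.Ioo (0 : ℝ) 1) ∧ (∑ x : S, q x = 1) ∧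
        v = (∑ x : {x : S // x ≠ ⊥}, thetaP mu q (x : S) * etaP p (x : S)) - (-Real.log (q ⊥))}
      (∑ x : S, p x * Real.log (p x)) ∧
    (∑ x : {x : S // x ≠ ⊥}, thetaP mu p (x : S) * etaP p (x : S)) - (-Real.log (p ⊥))
      = ∑ x : S, p x * Real.log (p x) := by
  have hmu : IsMoebiusFun mu := ⟨hmu_self, hmu_lt, hmu_nle⟩
  have hobj := hmu.sum_ne_bot_thetaP_mul_etaP_sub_neg_log hpsum
  refine ⟨⟨⟨p, hp, hpsum, (hobj p).symm⟩, ?_⟩, hobj p⟩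
  rintro _ ⟨q, hq, hqsum, rfl⟩
  rw [hobj q]
  exact sum_mul_log_le_sum_mul_log univ (fun x _ => (hp x).1.le) (fun x _ => (hq x).1)
    (by rw [hpsum, hqsum])
end

section
/- (Jacobian matrix for matrix balancing) Let n ≥ 1 and let p = (p_{ij}) be the probability matrix determined by θ ∈ ℝ^{S⁺} via p_θ. Then for all (i,j), (i',j') ∈ S⁺, the partial derivative of η with respect to θ satisfies ∂η_θ(i,j)/∂θ(i',j') = η_θ(max(i,i'), max(j,j')) − η_θ(i,j) η_θ(i',j'). -/
/-- `ψ(θ) = log Σ_{x∈S} exp(Σ_{s∈S⁺, s≤x} θ(s))` on `S = [n]×[n]` ordered componentwise,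
with least element `⊥ = (1,1)` and `S⁺ = S \ {⊥}`. -/
noncomputable def psi {n : ℕ} [NeZero n]
    (θ : {x : Fin n × Fin n // x ≠ ⊥} → ℝ) : ℝ :=
  Real.log (∑ x : Fin n × Fin n,
    Real.exp (∑ s : {x : Fin n × Fin n // x ≠ ⊥}, if (s : Fin n × Fin n) ≤ x then θ s else 0))

/-- `p_θ(x) = exp(Σ_{s∈S⁺, s≤x} θ(s) − ψ(θ))`. -/
noncomputable def pTheta {n : ℕ} [NeZero n]
    (θ : {x : Fin n × Fin n // x ≠ ⊥} → ℝ) (x : Fin n × Fin n) : ℝ :=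
  Real.exp ((∑ s : {x : Fin n × Fin n // x ≠ ⊥}, if (s : Fin n × Fin n) ≤ x then θ s else 0)
    - psi θ)

/-- `η_θ(i,j) = Σ_{i'≥i, j'≥j} p_θ(i',j')`. -/
noncomputable def etaTheta {n : ℕ} [NeZero n]
    (θ : {x : Fin n × Fin n // x ≠ ⊥} → ℝ) (x : Fin n × Fin n) : ℝ :=
  ∑ s ∈ Finset.univ.filter (fun s => x ≤ s), pTheta θ s

/-! `p_θ` is the Gibbs distribution of the energy `E_θ(y) = Σ_{s ≤ y} θ(s)`, and moving the
single coordinate `θ(x')` to `t` tilts `E_θ` by `(t - θ(x')) · 1[x' ≤ ·]`. Under an exponential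
tilt by `b`, the mass of a set `A` changes at the rate `Cov(1_A, b)`; for `A = {s | x ≤ s}` and
`b = 1[x' ≤ ·]` this covariance is `η(x ⊔ x') - η(x) η(x')`. -/

open Finset Real

lemma hasDerivAt_exp_tilt (e b t₀ : ℝ) :
    HasDerivAt (fun t => exp (e + (t - t₀) * b)) (b * exp e) t₀ := by
  have := ((((hasDerivAt_id t₀).sub_const t₀).mul_const b).const_add e).exp
  simpa [mul_comm] using this

section Gibbs

variable {ι : Type*} [Fintype ι]

noncomputable def gibbs (E : ι → ℝ) (y : ι) : ℝ :=
  exp (E y) / ∑ z, exp (E z)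

lemma sum_exp_pos [Nonempty ι] (E : ι → ℝ) : 0 < ∑ z, exp (E z) :=
  sum_pos (fun z _ => exp_pos (E z)) univ_nonempty

lemma sum_gibbs_eq_div (E : ι → ℝ) (A : Finset ι) :
    ∑ y ∈ A, gibbs E y = (∑ y ∈ A, exp (E y)) / ∑ z, exp (E z) := by
  rw [sum_div]; rfl

lemma hasDerivAt_sum_gibbs_tilt [Nonempty ι] (E b : ι → ℝ) (A : Finset ι) (t₀ : ℝ) :
    HasDerivAt (fun t => ∑ y ∈ A, gibbs (fun y => E y + (t - t₀) * b y) y)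
      (∑ y ∈ A, b y * gibbs E y - (∑ y ∈ A, gibbs E y) * ∑ y, b y * gibbs E y) t₀ := by
  simp only [sum_gibbs_eq_div]
  have hN := HasDerivAt.fun_sum fun y (_ : y ∈ A) => hasDerivAt_exp_tilt (E y) (b y) t₀
  have hD := HasDerivAt.fun_sum fun y (_ : y ∈ univ) => hasDerivAt_exp_tilt (E y) (b y) t₀
  have hZ := (sum_exp_pos E).ne'
  refine (hN.fun_div hD (by simpa using hZ)).congr_deriv ?_
  simp only [gibbs, sub_self, zero_mul, add_zero, mul_div_assoc', ← sum_div]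
  field_simp

lemma hasDerivAt_sum_gibbs_tilt_ite [Nonempty ι] (E : ι → ℝ) (A : Finset ι) (P : ι → Prop)
    [DecidablePred P] (t₀ : ℝ) :
    HasDerivAt (fun t => ∑ y ∈ A, gibbs (fun y => E y + (t - t₀) * if P y then 1 else 0) y)
      (∑ y ∈ A with P y, gibbs E y - (∑ y ∈ A, gibbs E y) * ∑ y with P y, gibbs E y) t₀ := by
  simpa only [boole_mul, ← sum_filter] using
    hasDerivAt_sum_gibbs_tilt E (fun y => if P y then 1 else 0) A t₀

end Gibbs

section MatrixBalancing

variable {n : ℕ} [NeZero n]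

noncomputable def energy (θ : {x : Fin n × Fin n // x ≠ ⊥} → ℝ) (y : Fin n × Fin n) : ℝ :=
  ∑ s : {x : Fin n × Fin n // x ≠ ⊥}, if (s : Fin n × Fin n) ≤ y then θ s else 0

lemma pTheta_eq_gibbs (θ : {x : Fin n × Fin n // x ≠ ⊥} → ℝ) :
    pTheta θ = gibbs (energy θ) := by
  funext y
  rw [pTheta, psi, exp_sub, exp_log (sum_exp_pos _)]
  rfl

lemma etaTheta_eq_sum_gibbs (θ : {x : Fin n × Fin n // x ≠ ⊥} → ℝ) (y : Fin n × Fin n) :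
    etaTheta θ y = ∑ s with y ≤ s, gibbs (energy θ) s := by
  rw [etaTheta, pTheta_eq_gibbs]

lemma energy_update (θ : {x : Fin n × Fin n // x ≠ ⊥} → ℝ) (x' : {x : Fin n × Fin n // x ≠ ⊥})
    (t : ℝ) :
    energy (Function.update θ x' t)
      = fun y => energy θ y + (t - θ x') * if (x' : Fin n × Fin n) ≤ y then 1 else 0 := by
  funext y
  simp only [energy, ← sum_erase_add _ _ (mem_univ x'), Function.update_self]
  rw [sum_congr rfl fun s hs => by rw [Function.update_of_ne (ne_of_mem_erase hs)]]
  split_ifs <;> ring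

end MatrixBalancing

/-- (Jacobian matrix for matrix balancing) For all `(i,j), (i',j') ∈ S⁺`,
`∂η_θ(i,j)/∂θ(i',j') = η_θ(max(i,i'), max(j,j')) − η_θ(i,j) η_θ(i',j')`. -/
theorem jacobian_matrix_balancing {n : ℕ} [NeZero n]
    (θ : {x : Fin n × Fin n // x ≠ ⊥} → ℝ) (x x' : {x : Fin n × Fin n // x ≠ ⊥}) :
    HasDerivAt (fun t => etaTheta (Function.update θ x' t) (x : Fin n × Fin n))
      (etaTheta θ (max (x : Fin n × Fin n).1 (x' : Fin n × Fin n).1,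
          max (x : Fin n × Fin n).2 (x' : Fin n × Fin n).2)
        - etaTheta θ (x : Fin n × Fin n) * etaTheta θ (x' : Fin n × Fin n))
      (θ x') := by
  simp only [etaTheta_eq_sum_gibbs, energy_update]
  have h := hasDerivAt_sum_gibbs_tilt_ite (energy θ) {s | (x : Fin n × Fin n) ≤ s}
    ((x' : Fin n × Fin n) ≤ ·) (θ x')
  simp only [filter_filter, ← sup_le_iff] at h
  exact h
end

section
/- (Existence and uniqueness of matrix balancing for positive matrices) Let A ∈ ℝ^{n×n} be a matrix with all entries strictly positive. Then there exist strictly positive vectors r, s ∈ ℝ^n such that the matrix A' with entries a'_{ij} = a_{ij} r_i s_j is doubly stochastic (every row and every column of A' sums to one), and the doubly stochastic matrix A' obtained in this way is unique. -/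
/-!
Existence: the potential `φ(r) = ∑ⱼ log (rA)ⱼ - ∑ᵢ log rᵢ` is invariant under scaling `r` and
tends to `+∞` when an entry of `r` tends to `0` while the largest stays `1`, so it attains its
minimum on the positive orthant at some `r`. With `s = 1 / (rA)` the columns of `(aᵢⱼ rᵢ sⱼ)` sum
to one. A Sinkhorn row step `r ↦ 1 / (As)` lowers `φ` by at least `∑ᵢ (xᵢ - 1 - log xᵢ) ≥ 0`, where
`xᵢ = rᵢ (As)ᵢ` are the row sums; at a minimizer this vanishes, so every `xᵢ = 1`.

Uniqueness: if the scalings `rᵢ sⱼ` and `r'ᵢ s'ⱼ` of `A` have the same row and column sums, then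
`∑ᵢⱼ aᵢⱼ (rᵢ sⱼ - r'ᵢ s'ⱼ) (log (rᵢ sⱼ) - log (r'ᵢ s'ⱼ)) = 0`, because the logarithms split into a
row part and a column part; as `log` is increasing, every term is nonnegative, hence zero.
-/

/-- A matrix is doubly stochastic if all entries are nonnegative and every row and every
column sums to one. -/
def IsDoublyStochastic {n : ℕ} (A : Matrix (Fin n) (Fin n) ℝ) : Prop :=
  (∀ i j, 0 ≤ A i j) ∧ (∀ i, ∑ j, A i j = 1) ∧ (∀ j, ∑ i, A i j = 1)

open Finset Real

theorem Real.sub_mul_log_sub_log_pos {x y : ℝ} (hx : 0 < x) (hy : 0 < y) (hxy : x ≠ y) :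
    0 < (x - y) * (log x - log y) := by
  rcases hxy.lt_or_gt with h | h
  · exact mul_pos_of_neg_of_neg (sub_neg.2 h) (sub_neg.2 (log_lt_log hx h))
  · exact mul_pos (sub_pos.2 h) (sub_pos.2 (log_lt_log hy h))

theorem Real.sub_mul_log_sub_log_nonneg {x y : ℝ} (hx : 0 < x) (hy : 0 < y) :
    0 ≤ (x - y) * (log x - log y) := by
  rcases eq_or_ne x y with rfl | hxy
  · simp
  · exact (sub_mul_log_sub_log_pos hx hy hxy).le

theorem Real.eq_one_of_sum_le_card_of_sum_log_nonneg {ι : Type*} [Fintype ι] {x : ι → ℝ}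
    (hx : ∀ i, 0 < x i) (hsum : ∑ i, x i ≤ Fintype.card ι) (hlog : 0 ≤ ∑ i, log (x i)) :
    ∀ i, x i = 1 := by
  by_contra! ⟨i₀, hi₀⟩
  have : ∑ i, log (x i) < ∑ i, (x i - 1) :=
    sum_lt_sum (fun i _ => log_le_sub_one_of_pos (hx i))
      ⟨i₀, mem_univ _, log_lt_sub_one_of_pos (hx i₀) hi₀⟩
  rw [sum_sub_distrib, sum_const, card_univ, nsmul_one] at this
  linarith

namespace Matrix

variable {ι κ : Type*}

theorem vecMul_pos [Fintype ι] [Nonempty ι] {A : Matrix ι κ ℝ} (hA : ∀ i j, 0 < A i j)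
    {r : ι → ℝ} (hr : ∀ i, 0 < r i) (j : κ) : 0 < (r ᵥ* A) j :=
  sum_pos (fun i _ => mul_pos (hr i) (hA i j)) univ_nonempty

theorem mulVec_pos [Fintype κ] [Nonempty κ] {A : Matrix ι κ ℝ} (hA : ∀ i j, 0 < A i j)
    {s : κ → ℝ} (hs : ∀ j, 0 < s j) (i : ι) : 0 < (A *ᵥ s) i :=
  sum_pos (fun j _ => mul_pos (hA i j) (hs j)) univ_nonempty

theorem mul_eq_mul_of_scaling_sums_eq [Fintype ι] [Fintype κ] {A : Matrix ι κ ℝ}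
    (hA : ∀ i j, 0 < A i j)
    {r r' : ι → ℝ} {s s' : κ → ℝ} (hr : ∀ i, 0 < r i) (hs : ∀ j, 0 < s j)
    (hr' : ∀ i, 0 < r' i) (hs' : ∀ j, 0 < s' j)
    (hrow : ∀ i, ∑ j, A i j * r i * s j = ∑ j, A i j * r' i * s' j)
    (hcol : ∀ j, ∑ i, A i j * r i * s j = ∑ i, A i j * r' i * s' j) :
    ∀ i j, r i * s j = r' i * s' j := by
  set T : ι → κ → ℝ := fun i j =>
    A i j * ((r i * s j - r' i * s' j) * (log (r i * s j) - log (r' i * s' j)))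
  set D : ι → κ → ℝ := fun i j => A i j * r i * s j - A i j * r' i * s' j
  have hsplit : ∀ i j, T i j
      = D i j * (log (r i) - log (r' i)) + D i j * (log (s j) - log (s' j)) := fun i j => by
    simp only [T, D, log_mul (hr i).ne' (hs j).ne', log_mul (hr' i).ne' (hs' j).ne']
    ring
  have hsum : ∑ i, ∑ j, T i j = 0 := by
    simp_rw [hsplit, sum_add_distrib, ← sum_mul]
    rw [sum_comm (f := fun i j => D i j * (log (s j) - log (s' j)))]
    simp_rw [← sum_mul]
    simp [D, sum_sub_distrib, hrow, hcol]
  have hT : ∀ i j, 0 ≤ T i j := fun i j => mul_nonneg (hA i j).le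
    (sub_mul_log_sub_log_nonneg (mul_pos (hr i) (hs j)) (mul_pos (hr' i) (hs' j)))
  intro i₀ j₀
  by_contra hne
  refine hsum.not_gt (sum_pos' (fun i _ => sum_nonneg fun j _ => hT i j)
    ⟨i₀, mem_univ _, sum_pos' (fun j _ => hT i₀ j) ⟨j₀, mem_univ _, mul_pos (hA i₀ j₀) ?_⟩⟩)
  exact sub_mul_log_sub_log_pos (mul_pos (hr i₀) (hs j₀)) (mul_pos (hr' i₀) (hs' j₀)) hne

section Potential

variable [Fintype ι] (A : Matrix ι ι ℝ)

noncomputable def balancingPotential (r : ι → ℝ) : ℝ :=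
  ∑ j, log ((r ᵥ* A) j) - ∑ i, log (r i)

theorem balancingPotential_le {x s : ι → ℝ} (hx : ∀ j, 0 < (x ᵥ* A) j) (hs : ∀ j, 0 < s j) :
    A.balancingPotential x
      ≤ x ⬝ᵥ (A *ᵥ s) - Fintype.card ι - ∑ j, log (s j) - ∑ i, log (x i) := by
  have hterm : ∀ j, log ((x ᵥ* A) j) ≤ (x ᵥ* A) j * s j - 1 - log (s j) := fun j => by
    have := log_le_sub_one_of_pos (mul_pos (hx j) (hs j))
    rw [log_mul (hx j).ne' (hs j).ne'] at this
    linarith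
  calc A.balancingPotential x
      ≤ ∑ j, ((x ᵥ* A) j * s j - 1 - log (s j)) - ∑ i, log (x i) :=
        sub_le_sub_right (sum_le_sum fun j _ => hterm j) _
    _ = _ := by
        rw [dotProduct_mulVec, dotProduct, sum_sub_distrib, sum_sub_distrib, sum_const, card_univ,
          nsmul_one]

theorem exp_sub_le_of_balancingPotential_le {m C : ℝ} (hm : 0 < m) (hmA : ∀ i j, m ≤ A i j)
    {x : ι → ℝ} (hx : ∀ i, 0 < x i) (hx1 : ∀ i, x i ≤ 1) {k : ι} (hk : x k = 1)
    (hC : A.balancingPotential x ≤ C) (i : ι) : exp (Fintype.card ι * log m - C) ≤ x i := by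
  have hcol : ∀ j, m ≤ (x ᵥ* A) j := fun j =>
    calc m ≤ x k * A k j := by rw [hk, one_mul]; exact hmA k j
      _ ≤ ∑ i, x i * A i j := single_le_sum (f := fun i => x i * A i j)
            (fun i _ => mul_nonneg (hx i).le (hm.trans_le (hmA i j)).le) (mem_univ k)
  have hcols : Fintype.card ι * log m ≤ ∑ j, log ((x ᵥ* A) j) :=
    calc _ = ∑ _ : ι, log m := by simp
      _ ≤ _ := sum_le_sum fun j _ => log_le_log hm (hcol j)
  have hrows : -log (x i) ≤ ∑ l, -log (x l) :=
    single_le_sum (fun l _ => neg_nonneg.2 (log_nonpos (hx l).le (hx1 l))) (mem_univ i)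
  rw [sum_neg_distrib] at hrows
  rw [← le_log_iff_exp_le (hx i)]
  unfold balancingPotential at hC
  linarith

variable {A} [Nonempty ι]

theorem balancingPotential_smul (hA : ∀ i j, 0 < A i j) {r : ι → ℝ} (hr : ∀ i, 0 < r i) {t : ℝ}
    (ht : 0 < t) : A.balancingPotential (t • r) = A.balancingPotential r := by
  have hc := vecMul_pos hA hr
  simp only [balancingPotential, smul_vecMul, Pi.smul_apply, smul_eq_mul,
    fun j => log_mul ht.ne' (hc j).ne', fun i => log_mul ht.ne' (hr i).ne', sum_add_distrib]
  ring

theorem continuousOn_balancingPotential (hA : ∀ i j, 0 < A i j) :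
    ContinuousOn A.balancingPotential {x | ∀ i, 0 < x i} :=
  (continuousOn_finsetSum _ fun j _ =>
      ((continuous_apply j).comp (continuous_id.matrix_vecMul continuous_const)).continuousOn.log
        fun _ hx => (vecMul_pos hA hx j).ne').sub
    (continuousOn_finsetSum _ fun i _ =>
      (continuous_apply i).continuousOn.log fun _ hx => (hx i).ne')

theorem balancingPotential_sinkhorn_le (hA : ∀ i j, 0 < A i j) {r : ι → ℝ} (hr : ∀ i, 0 < r i) :
    A.balancingPotential (A *ᵥ (r ᵥ* A)⁻¹)⁻¹
      ≤ A.balancingPotential r + ∑ i, log ((A *ᵥ (r ᵥ* A)⁻¹) i * r i) := by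
  set c := r ᵥ* A
  set d := A *ᵥ c⁻¹
  have hc : ∀ j, 0 < c j := vecMul_pos hA hr
  have hd : ∀ i, 0 < d i := mulVec_pos hA fun j => inv_pos.2 (hc j)
  have hdinv : ∀ i, 0 < d⁻¹ i := fun i => inv_pos.2 (hd i)
  calc A.balancingPotential d⁻¹
      ≤ d⁻¹ ⬝ᵥ d - Fintype.card ι - ∑ j, log (c⁻¹ j) - ∑ i, log (d⁻¹ i) :=
        A.balancingPotential_le (vecMul_pos hA hdinv) fun j => inv_pos.2 (hc j)
    _ = A.balancingPotential r + ∑ i, log (d i * r i) := by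
        simp only [balancingPotential, dotProduct, Pi.inv_apply, log_inv,
          fun i => log_mul (hd i).ne' (hr i).ne', inv_mul_cancel₀ (hd _).ne', sum_const, card_univ,
          nsmul_one, sum_neg_distrib, sum_add_distrib]
        ring

theorem mulVec_inv_vecMul_mul_eq_one (hA : ∀ i j, 0 < A i j) {r : ι → ℝ} (hr : ∀ i, 0 < r i)
    (hmin : IsMinOn A.balancingPotential {x | ∀ i, 0 < x i} r) (i : ι) :
    (A *ᵥ (r ᵥ* A)⁻¹) i * r i = 1 := by
  set c := r ᵥ* A
  set d := A *ᵥ c⁻¹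
  have hc : ∀ j, 0 < c j := vecMul_pos hA hr
  have hd : ∀ i, 0 < d i := mulVec_pos hA fun j => inv_pos.2 (hc j)
  have hsum : ∑ i, d i * r i = Fintype.card ι := by
    calc ∑ i, d i * r i = r ⬝ᵥ d := sum_congr rfl fun i _ => mul_comm _ _
      _ = c ⬝ᵥ c⁻¹ := dotProduct_mulVec r A c⁻¹
      _ = ∑ _ : ι, 1 := sum_congr rfl fun j _ => mul_inv_cancel₀ (hc j).ne'
      _ = Fintype.card ι := by simp
  have hlog : 0 ≤ ∑ i, log (d i * r i) := by
    have : A.balancingPotential r ≤ A.balancingPotential d⁻¹ :=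
      hmin fun i => inv_pos.2 (hd i)
    linarith [balancingPotential_sinkhorn_le hA hr]
  exact eq_one_of_sum_le_card_of_sum_log_nonneg (fun i => mul_pos (hd i) (hr i)) hsum.le hlog i

theorem exists_isMinOn_balancingPotential (hA : ∀ i j, 0 < A i j) :
    ∃ r, (∀ i, 0 < r i) ∧ IsMinOn A.balancingPotential {x | ∀ i, 0 < x i} r := by
  obtain ⟨⟨i₀, j₀⟩, hAmin⟩ := Finite.exists_min fun p : ι × ι => A p.1 p.2
  set C := A.balancingPotential 1
  set δ := exp (Fintype.card ι * log (A i₀ j₀) - C)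
  have hbox : ∀ x : ι → ℝ, (∀ i, 0 < x i) → (∀ i, x i ≤ 1) → (∃ k, x k = 1) →
      A.balancingPotential x ≤ C → x ∈ Set.Icc (fun _ : ι => δ) 1 := fun x hx hx1 ⟨k, hk⟩ hC =>
    ⟨exp_sub_le_of_balancingPotential_le A (hA i₀ j₀) (fun i j => hAmin (i, j)) hx hx1 hk hC, hx1⟩
  have hone : (1 : ι → ℝ) ∈ Set.Icc (fun _ : ι => δ) 1 :=
    hbox 1 (fun _ => one_pos) (fun _ => le_rfl) ⟨Classical.arbitrary ι, rfl⟩ le_rfl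
  have hpos : Set.Icc (fun _ : ι => δ) 1 ⊆ {x : ι → ℝ | ∀ i, 0 < x i} :=
    fun x hx i => (exp_pos _).trans_le (hx.1 i)
  obtain ⟨r, hrK, hr⟩ := isCompact_Icc.exists_isMinOn ⟨1, hone⟩
    ((continuousOn_balancingPotential hA).mono hpos)
  refine ⟨r, hpos hrK, fun y hy => show A.balancingPotential r ≤ A.balancingPotential y from ?_⟩
  obtain ⟨k, -, hk⟩ := exists_max_image univ y univ_nonempty
  have hyk : 0 < y k := hy k
  rw [← balancingPotential_smul hA hy (inv_pos.2 hyk)]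
  rcases le_or_gt (A.balancingPotential ((y k)⁻¹ • y)) C with hxC | hxC
  · have := hbox _ (fun i => mul_pos (inv_pos.2 hyk) (hy i))
      (fun i => inv_mul_le_one_of_le₀ (hk i (mem_univ i)) hyk.le)
      ⟨k, inv_mul_cancel₀ hyk.ne'⟩ hxC
    exact isMinOn_iff.1 hr _ this
  · exact (isMinOn_iff.1 hr 1 hone).trans hxC.le

end Potential

theorem exists_balancing [Fintype ι] {A : Matrix ι ι ℝ} (hA : ∀ i j, 0 < A i j) :
    ∃ r s : ι → ℝ, (∀ i, 0 < r i) ∧ (∀ j, 0 < s j) ∧ (∀ i, ∑ j, A i j * r i * s j = 1) ∧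
      ∀ j, ∑ i, A i j * r i * s j = 1 := by
  cases isEmpty_or_nonempty ι
  · exact ⟨1, 1, isEmptyElim, isEmptyElim, isEmptyElim, isEmptyElim⟩
  obtain ⟨r, hr, hmin⟩ := exists_isMinOn_balancingPotential hA
  have hc := vecMul_pos hA hr
  refine ⟨r, (r ᵥ* A)⁻¹, hr, fun j => inv_pos.2 (hc j), fun i => ?_, fun j => ?_⟩
  · rw [← mulVec_inv_vecMul_mul_eq_one hA hr hmin i, mulVec, dotProduct, sum_mul]
    exact sum_congr rfl fun j _ => by ring
  · calc ∑ i, A i j * r i * (r ᵥ* A)⁻¹ j = (r ᵥ* A) j * (r ᵥ* A)⁻¹ j := by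
          rw [vecMul, dotProduct, sum_mul]
          exact sum_congr rfl fun i _ => by ring
      _ = 1 := mul_inv_cancel₀ (hc j).ne'

end Matrix

/-- (Existence and uniqueness of matrix balancing for positive matrices) For a matrix `A`
with all entries strictly positive, there exist strictly positive vectors `r, s` such that
the matrix `A'` with `a'_{ij} = a_{ij} r_i s_j` is doubly stochastic, and the doubly
stochastic matrix obtained this way is unique. -/
theorem matrix_balancing_exists_unique {n : ℕ} (A : Matrix (Fin n) (Fin n) ℝ)
    (hA : ∀ i j, 0 < A i j) :
    ∃ r s : Fin n → ℝ, (∀ i, 0 < r i) ∧ (∀ j, 0 < s j) ∧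
      IsDoublyStochastic (Matrix.of fun i j => A i j * r i * s j) ∧
      ∀ r' s' : Fin n → ℝ, (∀ i, 0 < r' i) → (∀ j, 0 < s' j) →
        IsDoublyStochastic (Matrix.of fun i j => A i j * r' i * s' j) →
        (Matrix.of fun i j => A i j * r' i * s' j)
          = (Matrix.of fun i j => A i j * r i * s j) := by
  obtain ⟨r, s, hr, hs, hrow, hcol⟩ := Matrix.exists_balancing hA
  refine ⟨r, s, hr, hs, ⟨fun i j => (mul_pos (mul_pos (hA i j) (hr i)) (hs j)).le, hrow, hcol⟩,
    fun r' s' hr' hs' ⟨_, hrow', hcol'⟩ => ?_⟩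
  have hscaling := Matrix.mul_eq_mul_of_scaling_sums_eq hA hr' hs' hr hs
    (fun i => (hrow' i).trans (hrow i).symm) (fun j => (hcol' j).trans (hcol j).symm)
  ext i j
  simp only [Matrix.of_apply, mul_assoc, hscaling i j]
end
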